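/- arXiv:1306.1605 — 7 statements merged into one kernel-verified Lean document; each statement's English description precedes it below -/
import Mathlib

section
/- Let D ⊂ [0,1] be a Borel set of Lebesgue measure ρ, let n be a positive integer and 0 < b < ρ/n. Then there exist n points z_1, ..., z_n in D which belong to an arithmetic progression of step b, i.e., z_i − z_j is an integer multiple of b for all i, j. -/
/-!
The translates of `(0, b]` by the multiples of `b` tile `ℝ`. Integrating over `(0, b]` the number
of multiples `g` of `b` with `g + x ∈ D` therefore gives `vol D > n b`, so for some `x` more than
`n` of the points `g + x` lie in `D`, and they form a progression of step `b`.
-/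

open MeasureTheory

namespace MeasureTheory.IsAddFundamentalDomain

variable {G α : Type*} [AddGroup G] [Countable G] [AddAction G α] [MeasurableSpace α]
  [MeasurableConstVAdd G α] {μ : Measure α} [VAddInvariantMeasure G α μ] {s D : Set α}

theorem setLIntegral_encard_vadd_mem (h : IsAddFundamentalDomain G s μ) (hD : MeasurableSet D) :
    ∫⁻ x in s, ({g : G | g +ᵥ x ∈ D}.encard : ENNReal) ∂μ = μ D := by
  have hcount : ∀ x, ({g : G | g +ᵥ x ∈ D}.encard : ENNReal) =
      ∑' g : G, D.indicator 1 (g +ᵥ x) := fun x => by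
    rw [← ENNReal.tsum_set_one]
    exact (tsum_subtype _ 1).trans (tsum_congr fun g => rfl)
  simp_rw [hcount]
  rw [lintegral_tsum (f := fun g x => D.indicator 1 (g +ᵥ x)) fun g =>
      ((measurable_one.indicator hD).comp (measurable_const_vadd g)).aemeasurable,
    ← h.lintegral_eq_tsum'', lintegral_indicator_one hD]

theorem exists_lt_encard_vadd_mem (h : IsAddFundamentalDomain G s μ) (hD : MeasurableSet D)
    {n : ℕ} (hlt : n * μ s < μ D) : ∃ x, (n : ℕ∞) < {g : G | g +ᵥ x ∈ D}.encard := by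
  by_contra! hle
  refine hlt.not_ge ?_
  calc μ D = ∫⁻ x in s, ({g : G | g +ᵥ x ∈ D}.encard : ENNReal) ∂μ :=
        (h.setLIntegral_encard_vadd_mem hD).symm
    _ ≤ ∫⁻ _ in s, (n : ENNReal) ∂μ :=
        lintegral_mono fun x => by simpa using ENat.toENNReal_le.mpr (hle x)
    _ = n * μ s := setLIntegral_const s _

end MeasureTheory.IsAddFundamentalDomain

theorem exists_injective_mem_progression_of_mul_lt_volume {D : Set ℝ} (hD : MeasurableSet D)
    {b : ℝ} (hb : 0 < b) {n : ℕ} (hlt : n * ENNReal.ofReal b < volume D) :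
    ∃ z : Fin n → ℝ, Function.Injective z ∧ (∀ i, z i ∈ D) ∧
      ∀ i j, ∃ m : ℤ, z i - z j = m * b := by
  obtain ⟨x, hx⟩ := (isAddFundamentalDomain_Ioc hb 0).exists_lt_encard_vadd_mem hD
    (by simpa using hlt)
  obtain ⟨y, -⟩ := Fin.Embedding.exists_embedding_disjoint_range_of_add_le_ENat_card
    (s := (∅ : Set {g : AddSubgroup.zmultiples b | g +ᵥ x ∈ D})) (by simpa using hx.le)
  refine ⟨fun i => (y i : ℝ) + x, fun i j hij => ?_, fun i => (y i).2, fun i j => ?_⟩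
  · exact y.injective (Subtype.ext (Subtype.ext (add_right_cancel hij)))
  · obtain ⟨m, hm⟩ := AddSubgroup.mem_zmultiples_iff.mp ((y i).1 - (y j).1).2
    refine ⟨m, ?_⟩
    simp [← zsmul_eq_mul, hm]

theorem stmt2_general (D : Set ℝ) (hDmeas : MeasurableSet D)
    (ρ : ℝ) (hρpos : 0 < ρ) (hρ : volume D = ENNReal.ofReal ρ)
    (n : ℕ) (hn : 0 < n) (b : ℝ) (hb : 0 < b) (hbρ : b < ρ / n) :
    ∃ z : Fin n → ℝ, Function.Injective z ∧ (∀ i, z i ∈ D) ∧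
      ∀ i j, ∃ m : ℤ, z i - z j = m * b := by
  refine exists_injective_mem_progression_of_mul_lt_volume hDmeas hb ?_
  have hnb : n * b < ρ := by
    rwa [lt_div_iff₀ (by exact_mod_cast hn), mul_comm] at hbρ
  rwa [hρ, ← ENNReal.ofReal_natCast, ← ENNReal.ofReal_mul n.cast_nonneg,
    ENNReal.ofReal_lt_ofReal_iff hρpos]

/-- If `D ⊆ [0,1]` is measurable of Lebesgue measure `ρ`, `n ≥ 1` and `0 < b < ρ/n`,
then there exist `n` (distinct) points of `D` lying in an arithmetic progression of step `b`,
i.e. all pairwise differences are integer multiples of `b`. -/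
theorem stmt2 (D : Set ℝ) (hDmeas : MeasurableSet D) (hD1 : D ⊆ Set.Icc 0 1)
    (ρ : ℝ) (hρpos : 0 < ρ) (hρ : volume D = ENNReal.ofReal ρ)
    (n : ℕ) (hn : 0 < n) (b : ℝ) (hb : 0 < b) (hbρ : b < ρ / n) :
    ∃ z : Fin n → ℝ, Function.Injective z ∧ (∀ i, z i ∈ D) ∧
      ∀ i j, ∃ m : ℤ, z i - z j = m * b :=
  stmt2_general D hDmeas ρ hρpos hρ n hn b hb hbρ
end

section
/- Let A, B be complex d×d matrices and 0 < ρ ≤ 1/4 be such that σ_2(A) ≤ ρ²σ_1(A), σ_2(B) ≤ ρ²σ_1(B), and σ_1(BA) ≥ 4ρ σ_1(B)σ_1(A). If w is a unit vector in ℂ^d with ‖P_{E⁺(A)} w‖ ≥ ρ, then Aw ≠ 0 and ‖P_{E⁺(B)} (Aw/‖Aw‖)‖ ≥ 2ρ. -/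
/-- The second singular value of an operator on `ℂ^d`, via the Courant–Fischer
min-max characterization: the infimum over vectors `v` of the supremum of `‖A w‖`
over unit vectors `w` orthogonal to `v`.  (The first singular value is `‖A‖`.) -/
noncomputable def sigma2 {d : ℕ}
    (A : EuclideanSpace ℂ (Fin d) →L[ℂ] EuclideanSpace ℂ (Fin d)) : ℝ :=
  ⨅ v : EuclideanSpace ℂ (Fin d),
    sSup ((fun w => ‖A w‖) '' {w | ‖w‖ = 1 ∧ (inner ℂ v w : ℂ) = 0})

/-!
A unit vector `e` with `‖A e‖ = ‖A‖` satisfies `A† A e = ‖A‖² e`, so `A` maps `e`ᗮ into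
`(A e)`ᗮ, and by the min-max definition of `σ₂` it does so with norm at most `σ₂(A)`. Hence
`A x = ⟪e, x⟫ A e + O(σ₂(A) ‖x‖)`. For `w` this gives `‖A w‖ ≈ |⟪eA, w⟫| ‖A‖ > 0`; for `B A`
it gives `‖B (A eA)‖ ≥ (4ρ - ρ²) ‖B‖ ‖A‖` and then a lower bound on `‖B (A w)‖`; for `B` at
`x = A w / ‖A w‖` it gives `‖B x‖ ≤ (|⟪eB, x⟫| + ρ²) ‖B‖`. Since `‖B (A w)‖ = ‖A w‖ ‖B x‖`,
comparing these bounds forces `|⟪eB, x⟫| ≥ 2ρ` as soon as `ρ ≤ 1/4`.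
-/

open scoped InnerProductSpace InnerProduct

section InnerProductSpace

variable {𝕜 E F : Type*} [RCLike 𝕜] [NormedAddCommGroup E] [InnerProductSpace 𝕜 E]
  [NormedAddCommGroup F] [InnerProductSpace 𝕜 F] {e : E}

theorem inner_sub_inner_smul_self_eq_zero (he : ‖e‖ = 1) (x : E) :
    ⟪e, x - ⟪e, x⟫_𝕜 • e⟫_𝕜 = 0 := by
  rw [inner_sub_right, inner_smul_right, inner_self_eq_one_of_norm_eq_one he, mul_one, sub_self]

theorem norm_sub_inner_smul_self_le (he : ‖e‖ = 1) (x : E) :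
    ‖x - ⟪e, x⟫_𝕜 • e‖ ≤ ‖x‖ := by
  have horth : ⟪⟪e, x⟫_𝕜 • e, x - ⟪e, x⟫_𝕜 • e⟫_𝕜 = 0 := by
    rw [inner_smul_left, inner_sub_inner_smul_self_eq_zero he, mul_zero]
  have h := norm_add_sq_eq_norm_sq_add_norm_sq_of_inner_eq_zero _ _ horth
  rw [add_sub_cancel] at h
  nlinarith [norm_nonneg x, norm_nonneg (x - ⟪e, x⟫_𝕜 • e), sq_nonneg ‖⟪e, x⟫_𝕜 • e‖]

theorem norm_smul_add_sq (he : ‖e‖ = 1) (c : 𝕜) {z : E} (hz : ⟪e, z⟫_𝕜 = 0) :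
    ‖c • e + z‖ ^ 2 = ‖c‖ ^ 2 + ‖z‖ ^ 2 := by
  rw [norm_add_sq (𝕜 := 𝕜), inner_smul_left, hz, mul_zero, map_zero, mul_zero, add_zero,
    norm_smul, he, mul_one]

variable [CompleteSpace E] [CompleteSpace F] {T : E →L[𝕜] F}

theorem ContinuousLinearMap.adjoint_apply_apply_of_norm_apply_eq_opNorm (he : ‖e‖ = 1)
    (hTe : ‖T e‖ = ‖T‖) :
    (T†) (T e) = ((‖T‖ ^ 2 : ℝ) : 𝕜) • e := by
  have hinner : ⟪(T†) (T e), e⟫_𝕜 = ((‖T‖ ^ 2 : ℝ) : 𝕜) := by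
    rw [ContinuousLinearMap.adjoint_inner_left, inner_self_eq_norm_sq_to_K, hTe]
    push_cast; rfl
  have hnorm : ‖(T†) (T e)‖ ≤ ‖T‖ ^ 2 := by
    calc ‖(T†) (T e)‖ = ‖(T† ∘L T) e‖ := rfl
      _ ≤ ‖T† ∘L T‖ * ‖e‖ := (T† ∘L T).le_opNorm e
      _ = ‖T‖ ^ 2 := by rw [ContinuousLinearMap.norm_adjoint_comp_self, he, mul_one, sq]
  have hzero : ‖(T†) (T e) - ((‖T‖ ^ 2 : ℝ) : 𝕜) • e‖ ^ 2 ≤ 0 := by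
    rw [@norm_sub_sq 𝕜, inner_smul_right, hinner, norm_smul, he]
    simp only [map_pow, RCLike.mul_re, RCLike.re_ofReal_pow, RCLike.im_ofReal_pow, mul_zero,
      sub_zero, norm_pow, norm_algebraMap', norm_norm, mul_one]
    nlinarith [norm_nonneg ((T†) (T e))]
  rw [← sub_eq_zero, ← norm_le_zero_iff]
  nlinarith [norm_nonneg ((T†) (T e) - ((‖T‖ ^ 2 : ℝ) : 𝕜) • e)]

theorem ContinuousLinearMap.inner_apply_apply_eq_zero_of_norm_apply_eq_opNorm (he : ‖e‖ = 1)
    (hTe : ‖T e‖ = ‖T‖) {z : E} (hz : ⟪e, z⟫_𝕜 = 0) :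
    ⟪T e, T z⟫_𝕜 = 0 := by
  rw [← ContinuousLinearMap.adjoint_inner_left,
    T.adjoint_apply_apply_of_norm_apply_eq_opNorm he hTe, inner_smul_left, hz, mul_zero]

theorem ContinuousLinearMap.norm_apply_smul_add_sq (he : ‖e‖ = 1) (hTe : ‖T e‖ = ‖T‖) (c : 𝕜)
    {z : E} (hz : ⟪e, z⟫_𝕜 = 0) :
    ‖T (c • e + z)‖ ^ 2 = ‖c‖ ^ 2 * ‖T‖ ^ 2 + ‖T z‖ ^ 2 := by
  rw [map_add, map_smul, norm_add_sq (𝕜 := 𝕜), inner_smul_left,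
    T.inner_apply_apply_eq_zero_of_norm_apply_eq_opNorm he hTe hz, mul_zero, map_zero, mul_zero,
    add_zero, norm_smul, hTe, mul_pow]

theorem ContinuousLinearMap.norm_apply_mul_norm_le_norm_apply_smul_add_smul (he : ‖e‖ = 1)
    (hTe : ‖T e‖ = ‖T‖) {u : E} (hu1 : ‖u‖ = 1) (hu : ⟪e, u⟫_𝕜 = 0) (a b : 𝕜) :
    ‖T u‖ * ‖a • e + b • u‖ ≤ ‖T (a • e + b • u)‖ := by
  have hbu : ⟪e, b • u⟫_𝕜 = 0 := by rw [inner_smul_right, hu, mul_zero]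
  have hTu : ‖T u‖ ≤ ‖T‖ := by simpa [hu1] using T.le_opNorm u
  refine (pow_le_pow_iff_left₀ (by positivity) (norm_nonneg _) two_ne_zero).1 ?_
  rw [mul_pow, norm_smul_add_sq he a hbu, T.norm_apply_smul_add_sq he hTe a hbu, map_smul,
    norm_smul, norm_smul, hu1, mul_one]
  nlinarith [pow_le_pow_left₀ (norm_nonneg _) hTu 2, sq_nonneg ‖a‖, sq_nonneg ‖b‖]

theorem ContinuousLinearMap.exists_inner_eq_zero_norm_apply_le (he : ‖e‖ = 1) (hTe : ‖T e‖ = ‖T‖)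
    {u : E} (hu1 : ‖u‖ = 1) (hu : ⟪e, u⟫_𝕜 = 0) (v : E) :
    ∃ w : E, ‖w‖ = 1 ∧ ⟪v, w⟫_𝕜 = 0 ∧ ‖T u‖ ≤ ‖T w‖ := by
  by_cases hvu : ⟪v, u⟫_𝕜 = 0
  · exact ⟨u, hu1, hvu, le_rfl⟩
  set W := ⟪v, u⟫_𝕜 • e + (-⟪v, e⟫_𝕜) • u
  have hWpos : 0 < ‖W‖ := by
    have hW : ‖⟪v, u⟫_𝕜‖ ^ 2 ≤ ‖W‖ ^ 2 := by
      rw [norm_smul_add_sq he _ (by rw [inner_smul_right, hu, mul_zero])]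
      exact le_add_of_nonneg_right (sq_nonneg _)
    exact (norm_pos_iff.2 hvu).trans_le
      ((pow_le_pow_iff_left₀ (norm_nonneg _) (norm_nonneg _) two_ne_zero).1 hW)
  have hle :=
    T.norm_apply_mul_norm_le_norm_apply_smul_add_smul he hTe hu1 hu ⟪v, u⟫_𝕜 (-⟪v, e⟫_𝕜)
  refine ⟨(‖W‖⁻¹ : 𝕜) • W, ?_, ?_, ?_⟩
  · rw [norm_smul, norm_inv, RCLike.norm_ofReal, abs_norm, inv_mul_cancel₀ hWpos.ne']
  · rw [inner_smul_right, inner_add_right, inner_smul_right, inner_smul_right]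
    ring
  · rw [map_smul, norm_smul, norm_inv, RCLike.norm_ofReal, abs_norm, le_inv_mul_iff₀ hWpos]
    exact (mul_comm _ _).trans_le hle

end InnerProductSpace

theorem two_mul_le_of_sub_le_mul {ρ s p : ℝ} (hρ : 0 < ρ) (hρ4 : ρ ≤ 1 / 4) (hs : ρ ≤ s)
    (h : s * (4 * ρ - ρ ^ 2) - ρ ^ 2 ≤ s * (1 + ρ ^ 2 / 2) * (p + ρ ^ 2)) : 2 * ρ ≤ p := by
  by_contra! hp
  -- the coefficient of `s` in `h` at `p = 2ρ`
  have hK : ρ ≤ 2 * ρ - 2 * ρ ^ 2 - ρ ^ 3 - ρ ^ 4 / 2 := by nlinarith [pow_pos hρ 2, pow_pos hρ 3]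
  have hs0 : 0 < s := hρ.trans_le hs
  nlinarith [mul_le_mul_of_nonneg_right hs (hρ.le.trans hK), mul_lt_mul_of_pos_left hp
    (by positivity : 0 < s * (1 + ρ ^ 2 / 2))]

section sigma2

variable {d : ℕ} {A : EuclideanSpace ℂ (Fin d) →L[ℂ] EuclideanSpace ℂ (Fin d)}
  {e w : EuclideanSpace ℂ (Fin d)} {ρ : ℝ} {G : Type*} [NormedAddCommGroup G] [NormedSpace ℂ G]

theorem sigma2_nonneg (A : EuclideanSpace ℂ (Fin d) →L[ℂ] EuclideanSpace ℂ (Fin d)) :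
    0 ≤ sigma2 A :=
  le_ciInf fun _ => Real.sSup_nonneg <| by
    rintro _ ⟨w, -, rfl⟩
    exact norm_nonneg _

theorem norm_apply_le_sigma2_of_inner_eq_zero (he : ‖e‖ = 1) (hAe : ‖A e‖ = ‖A‖)
    {u : EuclideanSpace ℂ (Fin d)} (hu1 : ‖u‖ = 1) (hu : ⟪e, u⟫_ℂ = 0) :
    ‖A u‖ ≤ sigma2 A := by
  refine le_ciInf fun v => ?_
  obtain ⟨w, hw1, hvw, hle⟩ := A.exists_inner_eq_zero_norm_apply_le he hAe hu1 hu v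
  have hbdd : BddAbove ((fun w => ‖A w‖) '' {w | ‖w‖ = 1 ∧ ⟪v, w⟫_ℂ = 0}) := by
    refine ⟨‖A‖, ?_⟩
    rintro _ ⟨x, ⟨hx1, -⟩, rfl⟩
    simpa [hx1] using A.le_opNorm x
  exact hle.trans (le_csSup hbdd ⟨w, ⟨hw1, hvw⟩, rfl⟩)

theorem norm_apply_le_sigma2_mul_of_inner_eq_zero (he : ‖e‖ = 1) (hAe : ‖A e‖ = ‖A‖)
    {u : EuclideanSpace ℂ (Fin d)} (hu : ⟪e, u⟫_ℂ = 0) :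
    ‖A u‖ ≤ sigma2 A * ‖u‖ := by
  rcases eq_or_ne u 0 with rfl | hu0
  · simp
  have hn : 0 < ‖u‖ := norm_pos_iff.2 hu0
  have h := norm_apply_le_sigma2_of_inner_eq_zero he hAe (u := (‖u‖⁻¹ : ℂ) • u)
    (by rw [norm_smul, norm_inv, Complex.norm_real, norm_norm, inv_mul_cancel₀ hn.ne'])
    (by rw [inner_smul_right, hu, mul_zero])
  rwa [map_smul, norm_smul, norm_inv, Complex.norm_real, norm_norm, inv_mul_le_iff₀ hn,
    mul_comm] at h

theorem norm_apply_sub_inner_smul_le (he : ‖e‖ = 1) (hAe : ‖A e‖ = ‖A‖)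
    (x : EuclideanSpace ℂ (Fin d)) : ‖A x - ⟪e, x⟫_ℂ • A e‖ ≤ sigma2 A * ‖x‖ := by
  rw [← map_smul, ← map_sub]
  exact (norm_apply_le_sigma2_mul_of_inner_eq_zero he hAe
    (inner_sub_inner_smul_self_eq_zero he x)).trans
    (mul_le_mul_of_nonneg_left (norm_sub_inner_smul_self_le he x) (sigma2_nonneg A))

theorem norm_apply_apply_sub_inner_smul_le (he : ‖e‖ = 1) (hAe : ‖A e‖ = ‖A‖)
    (B : EuclideanSpace ℂ (Fin d) →L[ℂ] G) (x : EuclideanSpace ℂ (Fin d)) :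
    ‖B (A x) - ⟪e, x⟫_ℂ • B (A e)‖ ≤ ‖B‖ * (sigma2 A * ‖x‖) := by
  rw [← map_smul, ← map_sub]
  exact (B.le_opNorm _).trans
    (mul_le_mul_of_nonneg_left (norm_apply_sub_inner_smul_le he hAe x) (norm_nonneg B))

theorem inner_mul_sub_sigma2_le_norm_apply (he : ‖e‖ = 1) (hAe : ‖A e‖ = ‖A‖)
    (x : EuclideanSpace ℂ (Fin d)) :
    ‖⟪e, x⟫_ℂ‖ * ‖A‖ - sigma2 A * ‖x‖ ≤ ‖A x‖ := by
  have h := norm_sub_norm_le (⟪e, x⟫_ℂ • A e) (A x)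
  rw [norm_smul, hAe, norm_sub_rev] at h
  linarith [norm_apply_sub_inner_smul_le he hAe x]

theorem norm_apply_le_inner_mul_add_sigma2 (he : ‖e‖ = 1) (hAe : ‖A e‖ = ‖A‖)
    (x : EuclideanSpace ℂ (Fin d)) :
    ‖A x‖ ≤ ‖⟪e, x⟫_ℂ‖ * ‖A‖ + sigma2 A * ‖x‖ := by
  have h := norm_le_norm_add_norm_sub (⟪e, x⟫_ℂ • A e) (A x)
  rw [norm_smul, hAe, norm_sub_rev] at h
  linarith [norm_apply_sub_inner_smul_le he hAe x]

theorem norm_apply_sq_le_inner_sq_add_sigma2_sq (he : ‖e‖ = 1) (hAe : ‖A e‖ = ‖A‖)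
    (x : EuclideanSpace ℂ (Fin d)) :
    ‖A x‖ ^ 2 ≤ ‖⟪e, x⟫_ℂ‖ ^ 2 * ‖A‖ ^ 2 + (sigma2 A * ‖x‖) ^ 2 := by
  have hx : x = ⟪e, x⟫_ℂ • e + (x - ⟪e, x⟫_ℂ • e) := (add_sub_cancel _ _).symm
  rw [hx, A.norm_apply_smul_add_sq he hAe _ (inner_sub_inner_smul_self_eq_zero he x), ← hx]
  gcongr
  rw [map_sub, map_smul]
  exact norm_apply_sub_inner_smul_le he hAe x

theorem norm_comp_le_norm_apply_apply_add_sigma2 (he : ‖e‖ = 1) (hAe : ‖A e‖ = ‖A‖)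
    (B : EuclideanSpace ℂ (Fin d) →L[ℂ] G) :
    ‖B.comp A‖ ≤ ‖B (A e)‖ + ‖B‖ * sigma2 A := by
  refine (B.comp A).opNorm_le_bound (by have := sigma2_nonneg A; positivity) fun x => ?_
  have h := norm_le_norm_add_norm_sub (⟪e, x⟫_ℂ • B (A e)) (B (A x))
  rw [norm_smul, norm_sub_rev] at h
  have hc : ‖⟪e, x⟫_ℂ‖ ≤ ‖x‖ := by simpa [he] using norm_inner_le_norm (𝕜 := ℂ) e x
  have := norm_apply_apply_sub_inner_smul_le he hAe B x
  rw [B.comp_apply]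
  nlinarith [norm_nonneg (B (A e))]

theorem norm_apply_le_of_sigma2_le (hρ : 0 ≤ ρ) (he : ‖e‖ = 1) (hAe : ‖A e‖ = ‖A‖)
    (hA2 : sigma2 A ≤ ρ ^ 2 * ‖A‖) (hw : ‖w‖ = 1) (hs : ρ ≤ ‖⟪e, w⟫_ℂ‖) :
    ‖A w‖ ≤ ‖⟪e, w⟫_ℂ‖ * (1 + ρ ^ 2 / 2) * ‖A‖ := by
  have h := norm_apply_sq_le_inner_sq_add_sigma2_sq he hAe w
  rw [hw, mul_one] at h
  have hσ : sigma2 A ^ 2 ≤ (ρ ^ 2 * ‖A‖) ^ 2 := pow_le_pow_left₀ (sigma2_nonneg A) hA2 2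
  have hρs : ρ ^ 2 ≤ ‖⟪e, w⟫_ℂ‖ ^ 2 := pow_le_pow_left₀ hρ hs 2
  refine (pow_le_pow_iff_left₀ (norm_nonneg _) (by positivity) two_ne_zero).1 ?_
  nlinarith [mul_le_mul_of_nonneg_right hρs (by positivity : 0 ≤ ρ ^ 2 * ‖A‖ ^ 2)]

theorem le_norm_apply_apply_of_sigma2_le (he : ‖e‖ = 1) (hAe : ‖A e‖ = ‖A‖)
    (hA2 : sigma2 A ≤ ρ ^ 2 * ‖A‖) (B : EuclideanSpace ℂ (Fin d) →L[ℂ] G)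
    (hBA : 4 * ρ * ‖B‖ * ‖A‖ ≤ ‖B.comp A‖) (hw : ‖w‖ = 1) :
    (‖⟪e, w⟫_ℂ‖ * (4 * ρ - ρ ^ 2) - ρ ^ 2) * (‖A‖ * ‖B‖) ≤ ‖B (A w)‖ := by
  have hσ : ‖B‖ * sigma2 A ≤ ρ ^ 2 * (‖A‖ * ‖B‖) := by
    nlinarith [mul_le_mul_of_nonneg_left hA2 (norm_nonneg B)]
  have hBAe : (4 * ρ - ρ ^ 2) * (‖A‖ * ‖B‖) ≤ ‖B (A e)‖ := by
    linarith [norm_comp_le_norm_apply_apply_add_sigma2 he hAe B]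
  have h := norm_sub_norm_le (⟪e, w⟫_ℂ • B (A e)) (B (A w))
  rw [norm_smul, norm_sub_rev] at h
  have hB := norm_apply_apply_sub_inner_smul_le he hAe B w
  rw [hw, mul_one] at hB
  nlinarith [mul_le_mul_of_nonneg_left hBAe (norm_nonneg ⟪e, w⟫_ℂ)]

end sigma2

/-- If `σ₂(A) ≤ ρ²σ₁(A)`, `σ₂(B) ≤ ρ²σ₁(B)`, `σ₁(BA) ≥ 4ρσ₁(B)σ₁(A)` with
`0 < ρ ≤ 1/4`, and `w` is a unit vector with `‖P_{E⁺(A)} w‖ ≥ ρ`, then `Aw ≠ 0` and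
`‖P_{E⁺(B)} (Aw/‖Aw‖)‖ ≥ 2ρ`.  Here the top singular direction `E⁺(A)` is represented
by a maximizing unit vector `eA` (unique up to phase, as `σ₂(A) < σ₁(A)`), and
`‖P_{E⁺(A)} w‖ = |⟨eA, w⟩|`. -/
theorem stmt3 {d : ℕ}
    (A B : EuclideanSpace ℂ (Fin d) →L[ℂ] EuclideanSpace ℂ (Fin d))
    (ρ : ℝ) (hρ : 0 < ρ) (hρ4 : ρ ≤ 1 / 4)
    (hA2 : sigma2 A ≤ ρ ^ 2 * ‖A‖) (hB2 : sigma2 B ≤ ρ ^ 2 * ‖B‖)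
    (hAgap : sigma2 A < ‖A‖) (hBgap : sigma2 B < ‖B‖)
    (hBA : ‖B.comp A‖ ≥ 4 * ρ * ‖B‖ * ‖A‖)
    (eA eB : EuclideanSpace ℂ (Fin d)) (heA : ‖eA‖ = 1) (heB : ‖eB‖ = 1)
    (hAeA : ‖A eA‖ = ‖A‖) (hBeB : ‖B eB‖ = ‖B‖)
    (w : EuclideanSpace ℂ (Fin d)) (hw : ‖w‖ = 1)
    (hPw : ρ ≤ ‖(inner ℂ eA w : ℂ)‖) :
    A w ≠ 0 ∧ 2 * ρ ≤ ‖(inner ℂ eB ((‖A w‖)⁻¹ • A w) : ℂ)‖ := by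
  have hAn : 0 < ‖A‖ := (sigma2_nonneg A).trans_lt hAgap
  have hBn : 0 < ‖B‖ := (sigma2_nonneg B).trans_lt hBgap
  have hAw : 0 < ‖A w‖ := by
    have h := inner_mul_sub_sigma2_le_norm_apply heA hAeA w
    rw [hw, mul_one] at h
    nlinarith [mul_le_mul_of_nonneg_right hPw hAn.le]
  refine ⟨norm_pos_iff.1 hAw, ?_⟩
  set x := ‖A w‖⁻¹ • A w
  have hx : ‖x‖ = 1 := by rw [norm_smul, norm_inv, norm_norm, inv_mul_cancel₀ hAw.ne']
  have hBx_le : ‖B x‖ ≤ (‖⟪eB, x⟫_ℂ‖ + ρ ^ 2) * ‖B‖ := by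
    have h := norm_apply_le_inner_mul_add_sigma2 heB hBeB x
    rw [hx, mul_one] at h
    linarith
  have hBAw_le : ‖B (A w)‖ ≤
      ‖⟪eA, w⟫_ℂ‖ * (1 + ρ ^ 2 / 2) * (‖⟪eB, x⟫_ℂ‖ + ρ ^ 2) * (‖A‖ * ‖B‖) := by
    calc ‖B (A w)‖ = ‖A w‖ * ‖B x‖ := by
          rw [B.map_smul_of_tower, norm_smul, norm_inv, norm_norm, mul_inv_cancel_left₀ hAw.ne']
      _ ≤ (‖⟪eA, w⟫_ℂ‖ * (1 + ρ ^ 2 / 2) * ‖A‖) * ((‖⟪eB, x⟫_ℂ‖ + ρ ^ 2) * ‖B‖) :=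
        mul_le_mul (norm_apply_le_of_sigma2_le hρ.le heA hAeA hA2 hw hPw) hBx_le
          (norm_nonneg _) (by positivity)
      _ = _ := by ring
  refine two_mul_le_of_sub_le_mul hρ hρ4 hPw (le_of_mul_le_mul_right ?_ (mul_pos hAn hBn))
  exact (le_norm_apply_apply_of_sigma2_le heA hAeA hA2 B hBA hw).trans hBAw_le
end

section
/- Let φ_n: I → ℝ be a sequence of convex functions on an interval I and Φ: I → ℝ an affine function. If φ_n(t₀) ≥ Φ(t₀) + o(1) at an interior point t₀, and φ_n(t) ≤ Φ(t) + o(1) uniformly for t in I, then φ_n(t) = Φ(t) + o(1) uniformly on compact subsets of the interior of I. -/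
/-!
Subtracting the affine function `Φ` keeps convexity, so it suffices to treat `Φ = 0`. Let `g` be
convex on `[a, b]`, at most `δ` everywhere and at least `-δ` at `t₀`. For `t ≤ t₀` the point `t₀`
lies between `t` and `b`, and the three-point form of convexity
`(b - t) g(t₀) ≤ (b - t₀) g(t) + (t₀ - t) g(b)` gives `(b - t₀) g(t) ≥ -2 (b - a) δ`; symmetrically
`(t₀ - a) g(t) ≥ -2 (b - a) δ` for `t ≥ t₀`. Hence `g ≥ -C δ` with `C` depending only on `a, b, t₀`.
-/

open Set

theorem ConvexOn.sub_mul_le_of_mem_Icc {𝕜 : Type*} [Field 𝕜] [LinearOrder 𝕜]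
    [IsStrictOrderedRing 𝕜] {s : Set 𝕜} {f : 𝕜 → 𝕜} (hf : ConvexOn 𝕜 s f) {x y z : 𝕜}
    (hx : x ∈ s) (hz : z ∈ s) (hy : y ∈ Icc x z) :
    (z - x) * f y ≤ (z - y) * f x + (y - x) * f z := by
  obtain ⟨hxy, hyz⟩ := hy
  rcases hxy.eq_or_lt with rfl | hxy
  · simp
  have hxz : 0 < z - x := by linarith
  have key := hf.2 hx hz (div_nonneg (sub_nonneg.2 hyz) hxz.le)
    (div_nonneg (sub_nonneg.2 hxy.le) hxz.le) (by field)
  have hcomb : ((z - y) / (z - x)) • x + ((y - x) / (z - x)) • z = y := by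
    simp only [smul_eq_mul]; field
  rw [hcomb, smul_eq_mul, smul_eq_mul] at key
  calc (z - x) * f y ≤ (z - x) * ((z - y) / (z - x) * f x + (y - x) / (z - x) * f z) :=
        mul_le_mul_of_nonneg_left key hxz.le
    _ = (z - y) * f x + (y - x) * f z := by field

theorem ConvexOn.neg_le_min_mul_of_le {a b t₀ δ : ℝ} {g : ℝ → ℝ} (hg : ConvexOn ℝ (Icc a b) g)
    (ht₀ : t₀ ∈ Ioo a b) (hup : ∀ t ∈ Icc a b, g t ≤ δ) (hlow : -δ ≤ g t₀) {t : ℝ}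
    (ht : t ∈ Icc a b) : -(2 * (b - a) * δ) ≤ min (b - t₀) (t₀ - a) * g t := by
  obtain ⟨hat₀, ht₀b⟩ := ht₀
  obtain ⟨hat, htb⟩ := ht
  have hab : a ≤ b := (hat₀.trans ht₀b).le
  have hδ : 0 ≤ δ := by linarith [hup t₀ ⟨hat₀.le, ht₀b.le⟩]
  rcases le_or_gt 0 (g t) with hgt | hgt
  · have : 0 ≤ min (b - t₀) (t₀ - a) := le_min (by linarith) (by linarith)
    nlinarith
  rcases le_total t t₀ with htt₀ | ht₀t
  · have h3 := hg.sub_mul_le_of_mem_Icc ⟨hat, htb⟩ (right_mem_Icc.2 hab) ⟨htt₀, ht₀b.le⟩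
    have hgb := hup b (right_mem_Icc.2 hab)
    calc -(2 * (b - a) * δ) ≤ (b - t₀) * g t := by nlinarith
      _ ≤ min (b - t₀) (t₀ - a) * g t := mul_le_mul_of_nonpos_right (min_le_left _ _) hgt.le
  · have h3 := hg.sub_mul_le_of_mem_Icc (left_mem_Icc.2 hab) ⟨hat, htb⟩ ⟨hat₀.le, ht₀t⟩
    have hga := hup a (left_mem_Icc.2 hab)
    calc -(2 * (b - a) * δ) ≤ (t₀ - a) * g t := by nlinarith
      _ ≤ min (b - t₀) (t₀ - a) * g t := mul_le_mul_of_nonpos_right (min_le_right _ _) hgt.le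

theorem stmt7_general (a b : ℝ) (t₀ : ℝ) (ht₀ : t₀ ∈ Set.Ioo a b)
    (φ : ℕ → ℝ → ℝ) (hconv : ∀ n, ConvexOn ℝ (Set.Icc a b) (φ n))
    (m c : ℝ) (Φ : ℝ → ℝ) (hΦ : ∀ t, Φ t = m * t + c)
    (hlow : ∀ ε > 0, ∃ N, ∀ n ≥ N, Φ t₀ - ε ≤ φ n t₀)
    (hupp : ∀ ε > 0, ∃ N, ∀ n ≥ N, ∀ t ∈ Set.Icc a b, φ n t ≤ Φ t + ε) :
    ∀ K ⊆ Set.Ioo a b, IsCompact K →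
      ∀ ε > 0, ∃ N, ∀ n ≥ N, ∀ t ∈ K, |φ n t - Φ t| ≤ ε := by
  intro K hK _ ε hε
  have hΦconc : ConcaveOn ℝ (Icc a b) Φ :=
    (((LinearMap.lsmul ℝ ℝ m).concaveOn (convex_Icc a b)).add_const c).congr fun t _ => by
      simp [hΦ]
  have hr : 0 < min (b - t₀) (t₀ - a) := lt_min (by linarith [ht₀.2]) (by linarith [ht₀.1])
  have hba : 0 < b - a := by linarith [ht₀.1, ht₀.2]
  set δ := ε * min (b - t₀) (t₀ - a) / (2 * (b - a))
  have hδε : δ ≤ ε := by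
    rw [div_le_iff₀ (by positivity)]
    nlinarith [min_le_left (b - t₀) (t₀ - a), ht₀.1]
  obtain ⟨N₁, hN₁⟩ := hlow δ (by positivity)
  obtain ⟨N₂, hN₂⟩ := hupp δ (by positivity)
  refine ⟨max N₁ N₂, fun n hn t ht => ?_⟩
  have hup : ∀ s ∈ Icc a b, (φ n - Φ) s ≤ δ := fun s hs =>
    sub_le_iff_le_add'.2 (hN₂ n (le_of_max_le_right hn) s hs)
  have hlow₀ : -δ ≤ (φ n - Φ) t₀ := by
    rw [Pi.sub_apply]; linarith [hN₁ n (le_of_max_le_left hn)]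
  have htI : t ∈ Icc a b := Ioo_subset_Icc_self (hK ht)
  have hbound := ((hconv n).sub hΦconc).neg_le_min_mul_of_le ht₀ hup hlow₀ htI
  rw [show 2 * (b - a) * δ = min (b - t₀) (t₀ - a) * ε by field, Pi.sub_apply] at hbound
  exact abs_le.2 ⟨le_of_mul_le_mul_left (by linarith) hr, (hup t htI).trans hδε⟩

/-- If convex functions `φ n` on `I = [a,b]` satisfy `φ n t ≤ Φ t + o(1)` uniformly on `I`
for an affine function `Φ`, and `φ n t₀ ≥ Φ t₀ + o(1)` at an interior point `t₀`, then
`φ n = Φ + o(1)` uniformly on compact subsets of the interior of `I`. -/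
theorem stmt7 (a b : ℝ) (hab : a < b) (t₀ : ℝ) (ht₀ : t₀ ∈ Set.Ioo a b)
    (φ : ℕ → ℝ → ℝ) (hconv : ∀ n, ConvexOn ℝ (Set.Icc a b) (φ n))
    (m c : ℝ) (Φ : ℝ → ℝ) (hΦ : ∀ t, Φ t = m * t + c)
    (hlow : ∀ ε > 0, ∃ N, ∀ n ≥ N, Φ t₀ - ε ≤ φ n t₀)
    (hupp : ∀ ε > 0, ∃ N, ∀ n ≥ N, ∀ t ∈ Set.Icc a b, φ n t ≤ Φ t + ε) :
    ∀ K ⊆ Set.Ioo a b, IsCompact K →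
      ∀ ε > 0, ∃ N, ∀ n ≥ N, ∀ t ∈ K, |φ n t - Φ t| ≤ ε :=
  stmt7_general a b t₀ ht₀ φ hconv m c Φ hΦ hlow hupp
end

section
/- Let u, s be subspaces of ℂ^d with ℂ^d = u ⊕ s, and let P be the projection onto u along s (i.e., ker P = s and P restricted to u is the identity). Then ‖P‖ = 1/sin(θ), where θ is the minimal angle between u and s, defined by sin(θ) = min over unit vectors v ∈ u of the distance from v to s. -/
/-!
Decompose `x = y + z` with `y ∈ u`, `z ∈ s`, so that `P x = y`. Normalising `y` shows that
`‖P x‖ · sin θ ≤ ‖x‖`, i.e. `‖P‖ ≤ 1 / sin θ`. Conversely, for a unit vector `v ∈ u` and any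
`w ∈ s` we have `P (v - w) = v`, so `1 ≤ ‖P‖ · ‖v - w‖`, and taking the infimum gives
`1 ≤ ‖P‖ · sin θ`.
-/

namespace Submodule

variable {𝕜 E : Type*} [RCLike 𝕜] [NormedAddCommGroup E] [NormedSpace 𝕜 E]

def gapSet (u s : Submodule 𝕜 E) : Set ℝ :=
  {r : ℝ | ∃ v ∈ u, ‖v‖ = 1 ∧ ∃ w ∈ s, r = ‖v - w‖}

/-- The sine of the minimal angle between `u` and `s`. -/
noncomputable def minGap (u s : Submodule 𝕜 E) : ℝ :=
  sInf (u.gapSet s)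

variable {u s : Submodule 𝕜 E}

lemma nonneg_of_mem_gapSet {r : ℝ} (hr : r ∈ u.gapSet s) : 0 ≤ r := by
  obtain ⟨v, -, -, w, -, rfl⟩ := hr
  exact norm_nonneg _

lemma gapSet_nonempty (hu : u ≠ ⊥) : (u.gapSet s).Nonempty := by
  obtain ⟨v, hv, hv0⟩ := exists_mem_ne_zero_of_ne_bot hu
  exact ⟨_, _, u.smul_mem _ hv, norm_smul_inv_norm hv0, 0, s.zero_mem, rfl⟩

variable (u s) in
lemma minGap_nonneg : 0 ≤ u.minGap s :=
  Real.sInf_nonneg fun _ => nonneg_of_mem_gapSet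

lemma minGap_le_norm_sub {v w : E} (hv : v ∈ u) (hv1 : ‖v‖ = 1) (hw : w ∈ s) :
    u.minGap s ≤ ‖v - w‖ :=
  csInf_le ⟨0, fun _ => nonneg_of_mem_gapSet⟩ ⟨v, hv, hv1, w, hw, rfl⟩

lemma norm_mul_minGap_le_norm_add {y z : E} (hy : y ∈ u) (hz : z ∈ s) :
    ‖y‖ * u.minGap s ≤ ‖y + z‖ := by
  rcases eq_or_ne y 0 with rfl | hy0
  · simp
  set c : 𝕜 := (‖y‖ : 𝕜)⁻¹
  have hc : ‖c‖ = ‖y‖⁻¹ := by simp [c]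
  have hgap : u.minGap s ≤ ‖y‖⁻¹ * ‖y + z‖ := by
    have := minGap_le_norm_sub (u.smul_mem c hy) (norm_smul_inv_norm hy0)
      (s.neg_mem (s.smul_mem c hz))
    rwa [sub_neg_eq_add, ← smul_add, norm_smul, hc] at this
  calc ‖y‖ * u.minGap s ≤ ‖y‖ * (‖y‖⁻¹ * ‖y + z‖) := by gcongr
    _ = ‖y + z‖ := by field_simp [norm_ne_zero_iff.mpr hy0]

end Submodule

namespace ContinuousLinearMap

open Submodule

variable {𝕜 E : Type*} [RCLike 𝕜] [NormedAddCommGroup E] [NormedSpace 𝕜 E]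
  {u s : Submodule 𝕜 E} {P : E →L[𝕜] E}

lemma norm_apply_mul_minGap_le (hsup : u ⊔ s = ⊤) (hPs : ∀ x ∈ s, P x = 0)
    (hPu : ∀ x ∈ u, P x = x) (x : E) : ‖P x‖ * u.minGap s ≤ ‖x‖ := by
  obtain ⟨y, hy, z, hz, rfl⟩ := mem_sup.mp (hsup ▸ mem_top : x ∈ u ⊔ s)
  rw [map_add, hPu y hy, hPs z hz, add_zero]
  exact norm_mul_minGap_le_norm_add hy hz

lemma opNorm_mul_minGap_le_one (hsup : u ⊔ s = ⊤) (hPs : ∀ x ∈ s, P x = 0)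
    (hPu : ∀ x ∈ u, P x = x) : ‖P‖ * u.minGap s ≤ 1 := by
  rcases (minGap_nonneg u s).eq_or_lt with hgap | hgap
  · simp [← hgap]
  rw [← le_div_iff₀ hgap]
  refine P.opNorm_le_bound (by positivity) fun x => ?_
  rw [div_mul_eq_mul_div, one_mul, le_div_iff₀ hgap]
  exact norm_apply_mul_minGap_le hsup hPs hPu x

lemma norm_le_opNorm_mul_norm_sub (hPs : ∀ x ∈ s, P x = 0) (hPu : ∀ x ∈ u, P x = x)
    {v w : E} (hv : v ∈ u) (hw : w ∈ s) : ‖v‖ ≤ ‖P‖ * ‖v - w‖ := by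
  simpa [map_sub, hPu v hv, hPs w hw] using P.le_opNorm (v - w)

lemma one_le_opNorm_mul_minGap (hu : u ≠ ⊥) (hPs : ∀ x ∈ s, P x = 0)
    (hPu : ∀ x ∈ u, P x = x) : 1 ≤ ‖P‖ * u.minGap s := by
  have hbound : ∀ r ∈ u.gapSet s, 1 ≤ ‖P‖ * r := by
    rintro r ⟨v, hv, hv1, w, hw, rfl⟩
    simpa [hv1] using norm_le_opNorm_mul_norm_sub hPs hPu hv hw
  obtain ⟨r, hr⟩ := gapSet_nonempty (s := s) hu
  have hP : 0 < ‖P‖ :=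
    (norm_nonneg P).lt_of_ne fun hP0 => absurd (hbound r hr) (by simp [← hP0])
  rw [← div_le_iff₀' hP]
  exact le_csInf ⟨r, hr⟩ fun r hr => (div_le_iff₀' hP).mpr (hbound r hr)

end ContinuousLinearMap

open ContinuousLinearMap in
/-- For complementary subspaces `u ⊕ s = ℂ^d` (with `u ≠ 0`), the projection `P` onto `u`
along `s` (i.e. `ker P = s`, `P|_u = id`) has operator norm `‖P‖ = 1/sin θ`, where the
minimal angle `θ` satisfies `sin θ = inf{‖v - w‖ : v ∈ u, ‖v‖ = 1, w ∈ s}`. -/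
theorem stmt9 {d : ℕ} (u s : Submodule ℂ (EuclideanSpace ℂ (Fin d)))
    (hcompl : IsCompl u s) (hu : u ≠ ⊥)
    (P : EuclideanSpace ℂ (Fin d) →L[ℂ] EuclideanSpace ℂ (Fin d))
    (hPs : ∀ x ∈ s, P x = 0) (hPu : ∀ x ∈ u, P x = x) :
    ‖P‖ = 1 / sInf {r : ℝ | ∃ v ∈ u, ‖v‖ = 1 ∧ ∃ w ∈ s, r = ‖v - w‖} :=
  eq_one_div_of_mul_eq_one_left <| le_antisymm
    (opNorm_mul_minGap_le_one hcompl.sup_eq_top hPs hPu) (one_le_opNorm_mul_minGap hu hPs hPu)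
end

section
/- Let u: ℝ/ℤ → ℙℂ^d be a continuous (real-analytic) map. Then there exists a vector v ∈ ℂ^d such that v is not orthogonal to u(x) for any x ∈ ℝ/ℤ; i.e., for every x, ⟨v, w⟩ ≠ 0 for nonzero w representing u(x). -/
/-!
A vector is bad if it is orthogonal to some `u x`. The bad vectors make up a one-parameter family
of complex hyperplanes. Their union has real dimension `2d - 1`, so it is Lebesgue-null in
`ℂ^d ≅ ℝ^(2d)`.
To make this precise, fix `e` and send `w` to its projection onto `(u t)ᗮ`, where the time
`t = re ⟪e, w⟫` is read off `w` itself. This map is differentiable and constant along a real line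
in direction `u t`, so its derivative is everywhere singular and its range is null. Its range
contains every vector orthogonal to some `u t` with `⟪e, u t⟫ ≠ 0`, so finitely many such ranges,
one for each vector `e` of a basis, cover the bad vectors.
-/

open MeasureTheory Set Complex
open scoped InnerProductSpace

lemma exists_ne_zero_mul_re_eq_zero (b : ℂ) : ∃ c : ℂ, c ≠ 0 ∧ (c * b).re = 0 := by
  rcases eq_or_ne b 0 with rfl | hb
  · exact ⟨1, one_ne_zero, by simp⟩
  · exact ⟨I / b, div_ne_zero I_ne_zero hb, by rw [div_mul_cancel₀ _ hb, I_re]⟩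

lemma HasFDerivAt.apply_eq_zero_of_forall_add_smul_eq {𝕜 E F : Type*}
    [NontriviallyNormedField 𝕜] [NormedAddCommGroup E] [NormedSpace 𝕜 E]
    [NormedAddCommGroup F] [NormedSpace 𝕜 F] {f : E → F} {f' : E →L[𝕜] F} {w h : E}
    (hf : HasFDerivAt f f' w) (hconst : ∀ s : 𝕜, f (w + s • h) = f w) : f' h = 0 :=
  (hf.hasLineDerivAt h).unique <| by
    simpa only [HasLineDerivAt, hconst] using hasDerivAt_const (0 : 𝕜) (f w)

namespace OrthogonalSweep

variable {E : Type*} [NormedAddCommGroup E] [InnerProductSpace ℂ E]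

noncomputable def projOrth (a w : E) : E := w - (⟪a, w⟫_ℂ / ⟪a, a⟫_ℂ) • a

lemma projOrth_add_smul_self {a : E} (ha : a ≠ 0) (w : E) (c : ℂ) :
    projOrth a (w + c • a) = projOrth a w := by
  have : ⟪a, a⟫_ℂ ≠ 0 := inner_self_ne_zero.mpr ha
  simp only [projOrth, inner_add_right, inner_smul_right, add_div, mul_div_cancel_right₀ _ this,
    add_smul]
  abel

lemma projOrth_of_inner_eq_zero {a v : E} (hv : ⟪v, a⟫_ℂ = 0) : projOrth a v = v := by
  rw [projOrth, ← inner_conj_symm, hv, map_zero, zero_div, zero_smul, sub_zero]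

variable (u : ℝ → E) (e : E)

noncomputable def sweep (w : E) : E := projOrth (u (⟪e, w⟫_ℂ).re) w

lemma sweep_add_smul {w : E} (hu : u (⟪e, w⟫_ℂ).re ≠ 0) {c : ℂ}
    (hc : (c * ⟪e, u (⟪e, w⟫_ℂ).re⟫_ℂ).re = 0) :
    sweep u e (w + c • u (⟪e, w⟫_ℂ).re) = sweep u e w := by
  have ht : (⟪e, w + c • u (⟪e, w⟫_ℂ).re⟫_ℂ).re = (⟪e, w⟫_ℂ).re := by
    rw [inner_add_right, inner_smul_right, add_re, hc, add_zero]
  rw [sweep, ht, projOrth_add_smul_self hu, sweep]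

lemma mem_range_sweep {v : E} {x : ℝ} (hv : ⟪v, u x⟫_ℂ = 0) (he : ⟪e, u x⟫_ℂ ≠ 0) :
    v ∈ range (sweep u e) := by
  set c : ℂ := ((x - (⟪e, v⟫_ℂ).re : ℝ) : ℂ) / ⟪e, u x⟫_ℂ
  have ht : (⟪e, v + c • u x⟫_ℂ).re = x := by
    rw [inner_add_right, inner_smul_right, div_mul_cancel₀ _ he, add_re, ofReal_re]
    ring
  have hu : u x ≠ 0 := fun h => he (by rw [h, inner_zero_right])
  refine ⟨v + c • u x, ?_⟩
  rw [sweep, ht, projOrth_add_smul_self hu, projOrth_of_inner_eq_zero hv]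

variable {u}

lemma differentiable_sweep (hu : Differentiable ℝ u) (hnz : ∀ x, u x ≠ 0) :
    Differentiable ℝ (sweep u e) := by
  have hre : Differentiable ℝ fun w : E => (⟪e, w⟫_ℂ).re :=
    (reCLM.comp ((innerSL ℂ e).restrictScalars ℝ)).differentiable
  have ha : Differentiable ℝ fun w : E => u (⟪e, w⟫_ℂ).re := hu.comp hre
  have hinv : Differentiable ℝ fun w : E => (⟪u (⟪e, w⟫_ℂ).re, u (⟪e, w⟫_ℂ).re⟫_ℂ)⁻¹ :=
    (ha.inner ℂ ha).inv fun w => inner_self_ne_zero.mpr (hnz _)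
  unfold sweep projOrth
  simp only [div_eq_mul_inv]
  exact differentiable_id.sub (((ha.inner ℂ differentiable_id).mul hinv).smul ha)

variable [FiniteDimensional ℂ E]

lemma det_fderiv_sweep_eq_zero (hu : Differentiable ℝ u) (hnz : ∀ x, u x ≠ 0) (w : E) :
    (fderiv ℝ (sweep u e) w).det = 0 := by
  set a := u (⟪e, w⟫_ℂ).re
  obtain ⟨c, hc, hca⟩ := exists_ne_zero_mul_re_eq_zero ⟪e, a⟫_ℂ
  have hker : fderiv ℝ (sweep u e) w (c • a) = 0 := by
    refine (differentiable_sweep e hu hnz w).hasFDerivAt.apply_eq_zero_of_forall_add_smul_eq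
      fun s => ?_
    rw [← coe_smul, smul_smul]
    exact sweep_add_smul u e (hnz _) (by rw [mul_assoc, re_ofReal_mul, hca, mul_zero])
  refine LinearMap.det_eq_zero_iff_ker_ne_bot.mpr <| (Submodule.ne_bot_iff _).mpr
    ⟨c • a, hker, smul_ne_zero hc (hnz _)⟩

variable [MeasurableSpace E] [BorelSpace E] (μ : Measure E) [μ.IsAddHaarMeasure]

lemma addHaar_range_sweep (hu : Differentiable ℝ u) (hnz : ∀ x, u x ≠ 0) :
    μ (range (sweep u e)) = 0 := by
  rw [← image_univ]
  exact addHaar_image_eq_zero_of_det_fderivWithin_eq_zero μ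
    (fun w _ => (differentiable_sweep e hu hnz w).hasFDerivAt.hasFDerivWithinAt)
    (fun w _ => det_fderiv_sweep_eq_zero e hu hnz w)

end OrthogonalSweep

open OrthogonalSweep

variable {E : Type*} [NormedAddCommGroup E] [InnerProductSpace ℂ E] [FiniteDimensional ℂ E]
  {u : ℝ → E}

theorem addHaar_setOf_exists_inner_eq_zero [MeasurableSpace E] [BorelSpace E] (μ : Measure E)
    [μ.IsAddHaarMeasure] (hu : Differentiable ℝ u) (hnz : ∀ x, u x ≠ 0) :
    μ {v | ∃ x, ⟪v, u x⟫_ℂ = 0} = 0 := by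
  set b := Module.finBasis ℂ E
  refine measure_mono_null (fun v ⟨x, hv⟩ => ?_) <|
    measure_iUnion_null fun i => addHaar_range_sweep (b i) μ hu hnz
  obtain ⟨i, hi⟩ : ∃ i, ⟪b i, u x⟫_ℂ ≠ 0 := by
    by_contra! h
    exact hnz x <| InnerProductSpace.ext_inner_left_basis b fun i => by rw [h, inner_zero_right]
  exact mem_iUnion.mpr ⟨i, mem_range_sweep u (b i) hv hi⟩

theorem exists_forall_inner_ne_zero (hu : Differentiable ℝ u) (hnz : ∀ x, u x ≠ 0) :
    ∃ v : E, ∀ x, ⟪v, u x⟫_ℂ ≠ 0 := by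
  borelize E
  by_contra! h
  have hnull := addHaar_setOf_exists_inner_eq_zero Measure.addHaar hu hnz
  rw [eq_univ_of_forall h] at hnull
  exact isOpen_univ.measure_ne_zero Measure.addHaar univ_nonempty hnull

theorem stmt10_general {d : ℕ} (u : ℝ → EuclideanSpace ℂ (Fin d))
    (hnz : ∀ x, u x ≠ 0)
    (hanal : ∀ x, AnalyticAt ℝ u x) :
    ∃ v : EuclideanSpace ℂ (Fin d), ∀ x, (inner ℂ v (u x) : ℂ) ≠ 0 :=
  exists_forall_inner_ne_zero (fun x => (hanal x).differentiableAt) hnz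

/-- Let `u : ℝ/ℤ → ℙℂ^d` be a real-analytic map, represented by a one-periodic
real-analytic nowhere-vanishing map `u : ℝ → ℂ^d \ {0}`.  Then there exists a vector
`v ∈ ℂ^d` which is not orthogonal to the line `u(x)` for any `x`. -/
theorem stmt10 {d : ℕ} (u : ℝ → EuclideanSpace ℂ (Fin d))
    (hper : ∀ x, u (x + 1) = u x) (hnz : ∀ x, u x ≠ 0)
    (hanal : ∀ x, AnalyticAt ℝ u x) :
    ∃ v : EuclideanSpace ℂ (Fin d), ∀ x, (inner ℂ v (u x) : ℂ) ≠ 0 :=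
  stmt10_general u hnz hanal
end

section
/- Let α be irrational with continued fraction approximant p/q and previous denominator q'. Then for any x, y ∈ ℝ/ℤ, the set {y + kα mod 1 : 0 ≤ k ≤ q + q' − 1} is (1/q)-dense in ℝ/ℤ, i.e., every point of ℝ/ℤ is within distance 1/q of some point y + kα. -/
/-!
Let `P/Q` be the convergent with denominator `Q = q`. Then `P` and `Q` are coprime integers and
`ε = Qα - P` satisfies `|ε| ≤ 1/Q`. Given a target `t = z - y`, round `Qt` to an integer `m`
(down if `ε ≥ 0`, up otherwise) and solve `kP ≡ m (mod Q)` with `0 ≤ k < Q`. Modulo `1` we then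
have `t - kα = (Qt - m - kε)/Q`, where `Qt - m` and `kε` lie in the same one of `[0, 1]` and
`[-1, 0]`, so that their difference has absolute value at most `1`.
-/

open GenContFract

namespace GenContFract

variable {K : Type*} [Field K] [LinearOrder K] [FloorRing K]

theorem exists_int_contsAux_eq (v : K) (m : ℕ) :
    ∃ a b : ℤ, (GenContFract.of v).contsAux m = ⟨a, b⟩ := by
  induction m using Nat.twoStepInduction with
  | zero => exact ⟨1, 0, by simp⟩
  | one => exact ⟨⌊v⌋, 1, by simp [of_h_eq_floor]⟩
  | more m ih₀ ih₁ =>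
    obtain ⟨a₀, b₀, h₀⟩ := ih₀
    obtain ⟨a₁, b₁, h₁⟩ := ih₁
    cases hs : (GenContFract.of v).s.get? m with
    | none => exact ⟨a₁, b₁, (contsAux_stable_step_of_terminated hs).trans h₁⟩
    | some gp =>
      obtain ⟨hgp, c, hc⟩ := of_partNum_eq_one_and_exists_int_partDen_eq hs
      refine ⟨c * a₁ + a₀, c * b₁ + b₀, ?_⟩
      rw [contsAux_recurrence hs h₀ h₁, hgp, hc]
      push_cast
      ring_nf

theorem exists_int_conts_eq (v : K) (n : ℕ) :
    ∃ a b : ℤ, (GenContFract.of v).conts n = ⟨a, b⟩ := by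
  rw [nth_cont_eq_succ_nth_contAux]
  exact exists_int_contsAux_eq v (n + 1)

theorem isCoprime_of_conts_eq (v : K) {n : ℕ} (h : ¬(GenContFract.of v).TerminatedAt n)
    {a b : ℤ} (hab : (GenContFract.of v).conts (n + 1) = ⟨a, b⟩) : IsCoprime a b := by
  obtain ⟨a', b', hab'⟩ := exists_int_conts_eq v n
  have hdet : a' * b - b' * a = (-1 : ℤ) ^ (n + 1) := by
    have : (GenContFract.of v).nums n * (GenContFract.of v).dens (n + 1)
        - (GenContFract.of v).dens n * (GenContFract.of v).nums (n + 1) = (-1) ^ (n + 1) :=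
      SimpContFract.determinant (s := ⟨_, of_isSimpContFract v⟩) h
    simp only [num_eq_conts_a, den_eq_conts_b, hab, hab'] at this
    exact_mod_cast this
  have hsq : (-1 : ℤ) ^ (n + 1) * (-1) ^ (n + 1) = 1 := by rw [← mul_pow]; simp
  exact ⟨-(b' * (-1) ^ (n + 1)), a' * (-1) ^ (n + 1),
    by linear_combination (-1) ^ (n + 1) * hdet + hsq⟩

variable [IsStrictOrderedRing K]

theorem one_le_of_den (v : K) (n : ℕ) : 1 ≤ (GenContFract.of v).dens n :=
  zeroth_den_eq_one.symm.le.trans <|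
    monotone_nat_of_le_succ (f := (GenContFract.of v).dens) (fun _ => of_den_mono) n.zero_le

theorem zero_lt_of_den (v : K) (n : ℕ) : 0 < (GenContFract.of v).dens n :=
  zero_lt_one.trans_le (one_le_of_den v n)

theorem abs_dens_mul_sub_nums_le (v : K) {n : ℕ} (h : ¬(GenContFract.of v).TerminatedAt n) :
    |(GenContFract.of v).dens n * v - (GenContFract.of v).nums n| ≤
      1 / (GenContFract.of v).dens (n + 1) := by
  set d := (GenContFract.of v).dens
  have hd : 0 < d n := zero_lt_of_den v n
  have happrox : |v - (GenContFract.of v).nums n / d n| ≤ 1 / (d n * d (n + 1)) := by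
    rw [← conv_eq_num_div_den]
    exact abs_sub_convs_le h
  calc |d n * v - (GenContFract.of v).nums n|
      = d n * |v - (GenContFract.of v).nums n / d n| := by
        rw [← abs_of_pos hd, ← abs_mul, abs_of_pos hd, mul_sub, mul_div_cancel₀ _ hd.ne']
    _ ≤ d n * (1 / (d n * d (n + 1))) := by gcongr
    _ = 1 / d (n + 1) := by field_simp

theorem not_terminatedAt_of_irrational {v : ℝ} (hv : Irrational v) (n : ℕ) :
    ¬(GenContFract.of v).TerminatedAt n := fun h => by
  obtain ⟨r, hr⟩ := (terminates_iff_rat v).mp ⟨n, h⟩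
  exact hv ⟨r, hr.symm⟩

end GenContFract

theorem Int.exists_lt_mul_modEq_of_isCoprime {P Q : ℤ} (hPQ : IsCoprime P Q) (hQ : 0 < Q)
    (m : ℤ) : ∃ k : ℕ, (k : ℤ) < Q ∧ k * P ≡ m [ZMOD Q] := by
  obtain ⟨u, w, huw⟩ := hPQ
  have hr : 0 ≤ m * u % Q := Int.emod_nonneg _ hQ.ne'
  refine ⟨(m * u % Q).toNat, by simpa [hr] using Int.emod_lt_of_pos _ hQ, ?_⟩
  rw [Int.toNat_of_nonneg hr]
  calc m * u % Q * P ≡ m * u * P [ZMOD Q] := (Int.mod_modEq _ _).mul_right P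
    _ ≡ m [ZMOD Q] := Int.modEq_iff_dvd.mpr ⟨m * w, by linear_combination (-m) * huw⟩

section OrbitApproximation

variable {K : Type*} [Field K] [LinearOrder K] [IsStrictOrderedRing K] [FloorRing K]

theorem exists_nat_lt_abs_sub_mul_sub_int_le_of_nonneg {x : K} {P Q : ℤ} (hPQ : IsCoprime P Q)
    (hQ : 0 < Q) (hε₀ : 0 ≤ Q * x - P) (hε₁ : Q * x - P ≤ 1 / Q) (t : K) :
    ∃ k : ℕ, (k : ℤ) < Q ∧ ∃ j : ℤ, |t - k * x - j| ≤ 1 / Q := by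
  obtain ⟨k, hkQ, hk⟩ := Int.exists_lt_mul_modEq_of_isCoprime hPQ hQ ⌊Q * t⌋
  have hround := Int.floor_le (Q * t)
  have hround' := Int.lt_floor_add_one (Q * t)
  generalize ⌊(Q : K) * t⌋ = m at hk hround hround'
  obtain ⟨c, hc⟩ := Int.modEq_iff_dvd.mp hk
  refine ⟨k, hkQ, c, ?_⟩
  have hQK : (0 : K) < Q := by exact_mod_cast hQ
  have hkQK : (k : K) ≤ Q := by exact_mod_cast hkQ.le
  have hcK : (m : K) - k * P = Q * c := by exact_mod_cast hc
  have hdist : t - k * x - c = (Q * t - m - k * (Q * x - P)) / Q := by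
    field_simp
    linear_combination hcK
  have hdrift : k * (Q * x - P) ≤ 1 :=
    calc k * (Q * x - P) ≤ Q * (1 / Q) := mul_le_mul hkQK hε₁ hε₀ hQK.le
      _ = 1 := by field_simp
  rw [hdist, abs_div, abs_of_pos hQK]
  gcongr
  rw [abs_sub_le_iff]
  constructor <;> nlinarith [mul_nonneg (Nat.cast_nonneg (α := K) k) hε₀]

theorem exists_nat_lt_abs_sub_mul_sub_int_le {x : K} {P Q : ℤ} (hPQ : IsCoprime P Q)
    (hQ : 0 < Q) (hε : |Q * x - P| ≤ 1 / Q) (t : K) :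
    ∃ k : ℕ, (k : ℤ) < Q ∧ ∃ j : ℤ, |t - k * x - j| ≤ 1 / Q := by
  rcases le_total 0 (Q * x - P) with hε₀ | hε₀
  · exact exists_nat_lt_abs_sub_mul_sub_int_le_of_nonneg hPQ hQ hε₀ (abs_le.mp hε).2 t
  · obtain ⟨k, hkQ, j, hj⟩ := exists_nat_lt_abs_sub_mul_sub_int_le_of_nonneg (x := -x)
      hPQ.neg_left hQ (by push_cast; linarith) (by push_cast; linarith [(abs_le.mp hε).1]) (-t)
    refine ⟨k, hkQ, -j, ?_⟩
    rw [← abs_neg]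
    convert hj using 2
    push_cast
    ring

end OrbitApproximation

/-- Let `α` be irrational with continued fraction convergent denominators `q' = q_n` and
`q = q_{n+1}`.  Then for every `y`, the orbit points `y + kα`, `0 ≤ k ≤ q + q' - 1`, are
`(1/q)`-dense in `ℝ/ℤ`: every real `z` is within distance `1/q` of some `y + kα` modulo 1. -/
theorem stmt13 (α : ℝ) (hα : Irrational α) (n : ℕ) (q q' : ℝ)
    (hq : q = (GenContFract.of α).dens (n + 1))
    (hq' : q' = (GenContFract.of α).dens n)
    (y : ℝ) :
    ∀ z : ℝ, ∃ k : ℕ, (k : ℝ) ≤ q + q' - 1 ∧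
      ∃ j : ℤ, |z - (y + (k : ℝ) * α) - (j : ℝ)| ≤ 1 / q := by
  intro z
  have hnt := not_terminatedAt_of_irrational hα
  obtain ⟨P, Q, hPQ⟩ := exists_int_conts_eq α (n + 1)
  have hnum : (GenContFract.of α).nums (n + 1) = P := by rw [num_eq_conts_a, hPQ]
  have hden : (GenContFract.of α).dens (n + 1) = Q := by rw [den_eq_conts_b, hPQ]
  have hQ : (0 : ℤ) < Q := by exact_mod_cast hden ▸ (one_le_of_den α (n + 1))
  have happrox : |Q * α - P| ≤ 1 / (Q : ℝ) := by
    rw [← hnum, ← hden]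
    exact (abs_dens_mul_sub_nums_le α (hnt _)).trans
      (one_div_le_one_div_of_le (zero_lt_of_den α _) of_den_mono)
  obtain ⟨k, hkQ, j, hj⟩ := exists_nat_lt_abs_sub_mul_sub_int_le
    (isCoprime_of_conts_eq α (hnt n) hPQ) hQ happrox (z - y)
  refine ⟨k, ?_, j, ?_⟩
  · have hk : (k : ℝ) + 1 ≤ Q := by exact_mod_cast hkQ
    linarith [zero_le_of_den (v := α) (n := n)]
  · rw [hq, hden, sub_add_eq_sub_sub]
    exact hj
end

section
/- Let L^k: X → [−∞, ∞) for k = 0, 1, ..., d be functions on a topological space X with L^0 = 0, and set L_k = L^k − L^{k−1}. Fix a point p ∈ X and indices 1 ≤ a ≤ b ≤ d. Assume: L^{a−1} and L^b are continuous at p; L^j is upper semicontinuous at p for all j; L_a ≥ L_j ≥ L_b pointwise on X for a ≤ j ≤ b; and L_a(p) = L_b(p) > −∞. Then L_j is continuous at p for every a ≤ j ≤ b. -/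
open Filter Topology

/-!
Upper semicontinuity of `L^a` and continuity of `L^{a-1}` make `L_a = L^a - L^{a-1}` upper
semicontinuous at `p`; dually `L_b = L^b - L^{b-1}` is lower semicontinuous at `p`. Every `L_j`
with `a ≤ j ≤ b` is squeezed between them, and they agree at `p`, so `L_j` is continuous at `p`.
-/

section Squeeze

variable {α γ : Type*} [TopologicalSpace α] [LinearOrder γ] [TopologicalSpace γ] [OrderTopology γ]

theorem continuousAt_of_semicontinuous_squeeze {l f u : α → γ} {x : α}
    (hl : LowerSemicontinuousAt l x) (hu : UpperSemicontinuousAt u x)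
    (hlf : l ≤ᶠ[𝓝 x] f) (hfu : f ≤ᶠ[𝓝 x] u) (hlu : l x = u x) : ContinuousAt f x := by
  have hlx : l x = f x := le_antisymm hlf.self_of_nhds (hlu ▸ hfu.self_of_nhds)
  have hux : u x = f x := hlu ▸ hlx
  refine continuousAt_iff_lower_upperSemicontinuousAt.2 ⟨fun y hy => ?_, fun y hy => ?_⟩
  · filter_upwards [hl y (hy.trans_eq hlx.symm), hlf] with z hz hlz using hz.trans_le hlz
  · filter_upwards [hu y (hux.trans_lt hy), hfu] with z hz hfz using hfz.trans_lt hz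

end Squeeze

namespace EReal

variable {α : Type*} [TopologicalSpace α] {f g : α → EReal} {x : α}

theorem upperSemicontinuousAt_sub (hf : UpperSemicontinuousAt f x)
    (hg : LowerSemicontinuousAt g x) (h₁ : f x ≠ ⊤ ∨ g x ≠ ⊤) (h₂ : f x ≠ ⊥ ∨ g x ≠ ⊥) :
    UpperSemicontinuousAt (fun z => f z - g z) x :=
  hf.add' (continuous_neg.continuousAt.comp_lowerSemicontinuousAt_antitone hg
    neg_strictAnti.antitone) (continuousAt_add (by simpa using h₁) (by simpa using h₂))

theorem lowerSemicontinuousAt_sub (hf : LowerSemicontinuousAt f x)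
    (hg : UpperSemicontinuousAt g x) (h₁ : f x ≠ ⊤ ∨ g x ≠ ⊤) (h₂ : f x ≠ ⊥ ∨ g x ≠ ⊥) :
    LowerSemicontinuousAt (fun z => f z - g z) x :=
  hf.add' (continuous_neg.continuousAt.comp_upperSemicontinuousAt_antitone hg
    neg_strictAnti.antitone) (continuousAt_add (by simpa using h₁) (by simpa using h₂))

end EReal

theorem stmt15_general {X : Type*} [TopologicalSpace X] (d : ℕ)
    (Lsum : ℕ → X → EReal)
    (htop : ∀ k ≤ d, ∀ x, Lsum k x ≠ ⊤)
    (p : X) (a b : ℕ) (hab : a ≤ b) (hbd : b ≤ d)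
    (hca : ContinuousAt (Lsum (a - 1)) p) (hcb : ContinuousAt (Lsum b) p)
    (husc : ∀ j ≤ d, UpperSemicontinuousAt (Lsum j) p)
    (hmono : ∀ j, a ≤ j → j ≤ b → ∀ x : X,
      Lsum b x - Lsum (b - 1) x ≤ Lsum j x - Lsum (j - 1) x ∧
      Lsum j x - Lsum (j - 1) x ≤ Lsum a x - Lsum (a - 1) x)
    (heq : Lsum a p - Lsum (a - 1) p = Lsum b p - Lsum (b - 1) p)
    (hfin : Lsum a p - Lsum (a - 1) p ≠ ⊥) :
    ∀ j, a ≤ j → j ≤ b → ContinuousAt (fun x => Lsum j x - Lsum (j - 1) x) p := by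
  have not_both_bot {m : ℕ} (h : Lsum m p - Lsum (m - 1) p ≠ ⊥) :
      Lsum m p ≠ ⊥ ∨ Lsum (m - 1) p ≠ ⊥ := by
    contrapose! h
    rw [h.1, h.2, EReal.bot_sub]
  have hUa : UpperSemicontinuousAt (fun x => Lsum a x - Lsum (a - 1) x) p :=
    EReal.upperSemicontinuousAt_sub (husc a (hab.trans hbd)) hca.lowerSemicontinuousAt
      (.inl (htop a (hab.trans hbd) p)) (not_both_bot hfin)
  have hLb : LowerSemicontinuousAt (fun x => Lsum b x - Lsum (b - 1) x) p :=
    EReal.lowerSemicontinuousAt_sub hcb.lowerSemicontinuousAt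
      (husc (b - 1) ((b.sub_le 1).trans hbd))
      (.inl (htop b hbd p)) (not_both_bot (heq ▸ hfin))
  intro j hja hjb
  exact continuousAt_of_semicontinuous_squeeze hLb hUa
    (.of_forall fun x => (hmono j hja hjb x).1) (.of_forall fun x => (hmono j hja hjb x).2) heq.symm

/-- Abstract interpolation argument for continuity of individual Lyapunov exponents:
`Lsum k = L^k : X → [-∞, ∞)` with `L^0 = 0`, `L_k := L^k - L^{k-1}`.  If `L^{a-1}` and
`L^b` are continuous at `p`, all `L^j` are upper semicontinuous at `p`,
`L_a ≥ L_j ≥ L_b` pointwise for `a ≤ j ≤ b`, and `L_a(p) = L_b(p) > -∞`, then `L_j` is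
continuous at `p` for every `a ≤ j ≤ b`. -/
theorem stmt15 {X : Type*} [TopologicalSpace X] (d : ℕ)
    (Lsum : ℕ → X → EReal) (hL0 : ∀ x, Lsum 0 x = 0)
    (htop : ∀ k ≤ d, ∀ x, Lsum k x ≠ ⊤)
    (p : X) (a b : ℕ) (ha : 1 ≤ a) (hab : a ≤ b) (hbd : b ≤ d)
    (hca : ContinuousAt (Lsum (a - 1)) p) (hcb : ContinuousAt (Lsum b) p)
    (husc : ∀ j ≤ d, UpperSemicontinuousAt (Lsum j) p)
    (hmono : ∀ j, a ≤ j → j ≤ b → ∀ x : X,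
      Lsum b x - Lsum (b - 1) x ≤ Lsum j x - Lsum (j - 1) x ∧
      Lsum j x - Lsum (j - 1) x ≤ Lsum a x - Lsum (a - 1) x)
    (heq : Lsum a p - Lsum (a - 1) p = Lsum b p - Lsum (b - 1) p)
    (hfin : Lsum a p - Lsum (a - 1) p ≠ ⊥) :
    ∀ j, a ≤ j → j ≤ b → ContinuousAt (fun x => Lsum j x - Lsum (j - 1) x) p :=
  stmt15_general d Lsum htop p a b hab hbd hca hcb husc hmono heq hfin
end
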